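/- Let (Ω, μ) be a probability space and let ε : Ω → ℝⁿ be an exchangeable random vector. Let R ∈ ℝⁿ have nonincreasing coordinates (R₁ ≥ ⋯ ≥ R_n), let σ be a permutation of {1,…,n}, and write R^σ for the vector with (R^σ)_i = R_{σ(i)}. Let P : ℝⁿ → ℝⁿ be a map such that for every v ∈ ℝⁿ, P v ∈ K_n and ‖v − P v‖ ≤ ‖v − w‖ for all w ∈ K_n. Let 1 ≤ k ≤ n and let U : ℝ → ℝ be a nondecreasing convex function; assume the integrands below are integrable. Then ∫ ∑_{i=1}^k U((P(R + ε ω)) i) dμ(ω) ≥ ∫ ∑_{i=1}^k U((P(R^σ + ε ω)) i) dμ(ω): in the Blind Case with quota k, reporting the true ranking maximizes the expected utility. -/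

import Mathlib

open MeasureTheory

noncomputable section

/-- The monotone (isotonic) cone of nonincreasing vectors in `ℝⁿ`. -/
def monoCone (n : ℕ) : Set (EuclideanSpace ℝ (Fin n)) :=
  {x | ∀ i j : Fin n, i ≤ j → x j ≤ x i}

/-- `p` is an isotonic projection of `y` onto the monotone cone. -/
def IsIsoProj {n : ℕ} (y p : EuclideanSpace ℝ (Fin n)) : Prop :=
  p ∈ monoCone n ∧ ∀ w ∈ monoCone n, ‖y - p‖ ≤ ‖y - w‖

/-- A random vector is exchangeable if its law is invariant under coordinate
permutations. -/
def Exchangeable {n : ℕ} {Ω : Type*} [MeasurableSpace Ω] (μ : Measure Ω)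
    (ε : Ω → EuclideanSpace ℝ (Fin n)) : Prop :=
  ∀ τ : Equiv.Perm (Fin n),
    Measure.map (fun ω => (WithLp.toLp 2 (fun i => ε ω (τ i)) : EuclideanSpace ℝ (Fin n))) μ =
      Measure.map ε μ

/-!
The inequality already holds for every realisation `e` of the noise. As `R` is sorted, each
prefix sum of `R^σ + e` is at most the corresponding prefix sum of `R + e`. The isotonic
projection preserves this domination of prefix sums: at the last maximiser of the difference of
the prefix sums of the two projections, the variational inequality forces the first projection to
be flat, which pushes the maximum one step further. Since projections are nonincreasing,
Tomić's weak-majorization inequality, proved by Abel summation against the (monotone,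
nonnegative) right derivative of `U`, turns prefix-sum domination into the inequality for
`∑_{i<k} U`.
-/

open Finset

open scoped InnerProductSpace

lemma ConvexOn.add_rightDeriv_mul_sub_le {U : ℝ → ℝ} (hU : ConvexOn ℝ Set.univ U) (x y : ℝ) :
    U x + derivWithin U (Set.Ioi x) x * (y - x) ≤ U y := by
  have hx : x ∈ interior (Set.univ : Set ℝ) := by simp
  rcases lt_trichotomy x y with hxy | rfl | hyx
  · have := hU.rightDeriv_le_slope_of_mem_interior hx (Set.mem_univ y) hxy
    rw [slope_def_field, le_div_iff₀ (sub_pos.2 hxy)] at this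
    linarith
  · simp
  · have := (hU.slope_le_leftDeriv_of_mem_interior (Set.mem_univ y) hx hyx).trans
      (hU.leftDeriv_le_rightDeriv_of_mem_interior hx)
    rw [slope_def_field, div_le_iff₀ (sub_pos.2 hyx)] at this
    linarith

lemma ConvexOn.rightDeriv_nonneg {U : ℝ → ℝ} (hUc : ConvexOn ℝ Set.univ U) (hU : Monotone U)
    (x : ℝ) : 0 ≤ derivWithin U (Set.Ioi x) x := by
  have hx : x ∈ interior (Set.univ : Set ℝ) := by simp
  calc 0 ≤ slope U (x - 1) x := by
        rw [slope_def_field]; exact div_nonneg (sub_nonneg.2 (hU (by linarith))) (by linarith)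
    _ ≤ derivWithin U (Set.Iio x) x :=
        hUc.slope_le_leftDeriv_of_mem_interior (Set.mem_univ _) hx (by linarith)
    _ ≤ _ := hUc.leftDeriv_le_rightDeriv_of_mem_interior hx

lemma sum_range_mul_nonneg_of_antitoneOn {c δ : ℕ → ℝ} {k : ℕ}
    (hc : AntitoneOn c (Set.Iio k)) (hc0 : ∀ i < k, 0 ≤ c i)
    (hδ : ∀ m ≤ k, 0 ≤ ∑ i ∈ range m, δ i) :
    0 ≤ ∑ i ∈ range k, c i * δ i := by
  rcases Nat.eq_zero_or_pos k with rfl | hk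
  · simp
  have := sum_range_by_parts c δ k
  simp only [smul_eq_mul] at this
  rw [this, sub_nonneg]
  refine (sum_nonpos fun i hi => ?_).trans (mul_nonneg (hc0 _ (by omega)) (hδ k le_rfl))
  rw [mem_range] at hi
  have := hc (show i ∈ Set.Iio k by simp; omega) (show i + 1 ∈ Set.Iio k by simp; omega)
    (by omega)
  exact mul_nonpos_of_nonpos_of_nonneg (by linarith) (hδ _ (by omega))

theorem ConvexOn.sum_range_le_of_partialSums_le {U : ℝ → ℝ} (hUc : ConvexOn ℝ Set.univ U)
    (hU : Monotone U) {x y : ℕ → ℝ} {k : ℕ} (hx : AntitoneOn x (Set.Iio k))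
    (hxy : ∀ m ≤ k, ∑ i ∈ range m, x i ≤ ∑ i ∈ range m, y i) :
    ∑ i ∈ range k, U (x i) ≤ ∑ i ∈ range k, U (y i) := by
  set g := fun t => derivWithin U (Set.Ioi t) t
  have hgδ : 0 ≤ ∑ i ∈ range k, g (x i) * (y i - x i) := by
    refine sum_range_mul_nonneg_of_antitoneOn (fun i hi j hj hij => ?_)
      (fun i _ => hUc.rightDeriv_nonneg hU _) (fun m hm => ?_)
    · exact hUc.monotoneOn_rightDeriv (by simp) (by simp) (hx hi hj hij)
    · rw [sum_sub_distrib, sub_nonneg]; exact hxy m hm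
  calc ∑ i ∈ range k, U (x i)
      ≤ ∑ i ∈ range k, (U (x i) + g (x i) * (y i - x i)) := by
        rw [sum_add_distrib]; linarith
    _ ≤ ∑ i ∈ range k, U (y i) :=
        sum_le_sum fun i _ => hUc.add_rightDeriv_mul_sub_le _ _

section IsotonicProjection

variable {n : ℕ}

def prefixSum (y : Fin n → ℝ) (m : ℕ) : ℝ :=
  ∑ i ∈ univ.filter (fun i : Fin n => (i : ℕ) < m), y i

lemma prefixSum_succ (y : Fin n → ℝ) {m : ℕ} (hm : m < n) :
    prefixSum y (m + 1) = prefixSum y m + y ⟨m, hm⟩ := by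
  have : univ.filter (fun i : Fin n => (i : ℕ) < m + 1) =
      insert ⟨m, hm⟩ (univ.filter fun i : Fin n => (i : ℕ) < m) := by
    ext i; simp only [mem_filter, mem_univ, true_and, mem_insert, Fin.ext_iff]; omega
  rw [prefixSum, this, sum_insert (by simp), add_comm, prefixSum]

lemma prefixSum_of_le (y : Fin n → ℝ) {m : ℕ} (hm : n ≤ m) : prefixSum y m = ∑ i, y i := by
  rw [prefixSum, filter_true_of_mem fun i _ => i.isLt.trans_le hm]

lemma prefixSum_add (y z : Fin n → ℝ) (m : ℕ) :
    prefixSum (y + z) m = prefixSum y m + prefixSum z m :=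
  sum_add_distrib

lemma convex_monoCone : Convex ℝ (monoCone n) := by
  intro x hx y hy a b ha hb _ i j hij
  simp only [PiLp.add_apply, PiLp.smul_apply, smul_eq_mul]
  have := hx i j hij; have := hy i j hij
  nlinarith

lemma add_mem_monoCone {x y : EuclideanSpace ℝ (Fin n)} (hx : x ∈ monoCone n)
    (hy : y ∈ monoCone n) : x + y ∈ monoCone n := fun i j hij => by
  simpa using add_le_add (hx i j hij) (hy i j hij)

def stepVec (n m : ℕ) : EuclideanSpace ℝ (Fin n) :=
  WithLp.toLp 2 fun i => if (i : ℕ) < m then 1 else 0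

lemma stepVec_mem_monoCone (m : ℕ) : stepVec n m ∈ monoCone n := by
  intro i j hij
  have : (i : ℕ) ≤ j := hij
  simp only [stepVec]
  split_ifs <;> first | omega | norm_num

lemma inner_stepVec (v : EuclideanSpace ℝ (Fin n)) (m : ℕ) :
    ⟪v, stepVec n m⟫_ℝ = prefixSum v m := by
  simp [stepVec, PiLp.inner_apply, prefixSum, sum_filter]

lemma IsIsoProj.inner_sub_le_zero {y p w : EuclideanSpace ℝ (Fin n)} (hp : IsIsoProj y p)
    (hw : w ∈ monoCone n) : ⟪y - p, w - p⟫_ℝ ≤ 0 := by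
  have : Nonempty (monoCone n) := ⟨⟨p, hp.1⟩⟩
  have hbdd : BddBelow (Set.range fun w : monoCone n => ‖y - (w : EuclideanSpace ℝ (Fin n))‖) :=
    ⟨0, by rintro _ ⟨w, rfl⟩; exact norm_nonneg _⟩
  have hinf : ‖y - p‖ = ⨅ w : monoCone n, ‖y - (w : EuclideanSpace ℝ (Fin n))‖ :=
    le_antisymm (le_ciInf fun w => hp.2 w w.2) (ciInf_le hbdd ⟨p, hp.1⟩)
  exact (norm_eq_iInf_iff_real_inner_le_zero convex_monoCone hp.1).1 hinf w hw

lemma IsIsoProj.prefixSum_le {y p : EuclideanSpace ℝ (Fin n)} (hp : IsIsoProj y p) (m : ℕ) :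
    prefixSum y m ≤ prefixSum p m := by
  have := hp.inner_sub_le_zero (add_mem_monoCone hp.1 (stepVec_mem_monoCone m))
  rwa [add_sub_cancel_left, inner_sub_left, inner_stepVec, inner_stepVec, sub_nonpos] at this

lemma IsIsoProj.prefixSum_le_of_sub_mem {y p : EuclideanSpace ℝ (Fin n)} (hp : IsIsoProj y p)
    {m : ℕ} {t : ℝ} (ht : 0 < t) (hw : p - t • stepVec n m ∈ monoCone n) :
    prefixSum p m ≤ prefixSum y m := by
  have := hp.inner_sub_le_zero hw
  rw [sub_sub_cancel_left, inner_neg_right, inner_smul_right, inner_sub_left, inner_stepVec,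
    inner_stepVec, neg_nonpos] at this
  nlinarith

lemma IsIsoProj.sum_le {y p : EuclideanSpace ℝ (Fin n)} (hp : IsIsoProj y p) :
    ∑ i, p i ≤ ∑ i, y i := by
  have hw : p - (1 : ℝ) • stepVec n n ∈ monoCone n := fun i j hij => by
    simpa [stepVec] using hp.1 i j hij
  simpa only [prefixSum_of_le _ le_rfl] using hp.prefixSum_le_of_sub_mem one_pos hw

lemma IsIsoProj.apply_eq_of_prefixSum_lt {y p : EuclideanSpace ℝ (Fin n)} (hp : IsIsoProj y p)
    {i j : Fin n} (hij : (j : ℕ) = i + 1) (hlt : prefixSum y j < prefixSum p j) : p i = p j := by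
  refine le_antisymm ?_ (hp.1 i j (by rw [Fin.le_def]; omega))
  by_contra! hji
  have hw : p - (p i - p j) • stepVec n j ∈ monoCone n := by
    intro a b hab
    have hab' : (a : ℕ) ≤ b := hab
    have := hp.1 a b hab
    simp only [PiLp.sub_apply, PiLp.smul_apply, smul_eq_mul, stepVec]
    split_ifs with hb ha
    · linarith
    · omega
    · linarith [hp.1 a i (by rw [Fin.le_def]; omega), hp.1 j b (by rw [Fin.le_def]; omega)]
    · linarith
  linarith [hp.prefixSum_le_of_sub_mem (sub_pos.2 hji) hw]

theorem IsIsoProj.prefixSum_mono {y z p q : EuclideanSpace ℝ (Fin n)} (hp : IsIsoProj y p)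
    (hq : IsIsoProj z q) (hyz : ∀ m, prefixSum y m ≤ prefixSum z m) (m : ℕ) :
    prefixSum p m ≤ prefixSum q m := by
  set D : ℕ → ℝ := fun j => prefixSum p j - prefixSum q j with hD
  have hD_tail : ∀ j, n ≤ j → D j ≤ 0 := fun j hj => by
    have := hyz n
    have := hq.prefixSum_le n
    simp only [hD, prefixSum_of_le _ hj, prefixSum_of_le _ le_rfl] at *
    linarith [hp.sum_le]
  by_contra! hm
  -- `l` is the largest maximiser of `D` on `[0, n]`: the lexicographic order breaks ties.
  obtain ⟨l, hl, hmax⟩ := (range (n + 1)).exists_max_image (fun j => toLex (D j, j))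
    nonempty_range_add_one
  have hD_le : ∀ j ≤ n, D j ≤ D l := fun j hj =>
    (Prod.Lex.toLex_le_toLex'.1 (hmax j (mem_range.2 (by omega)))).1
  have hmn : m < n := by
    by_contra! h; linarith [hD_tail m h, show 0 < D m by simp only [hD]; linarith]
  have hDl : 0 < D l := by linarith [hD_le m hmn.le, show 0 < D m by simp only [hD]; linarith]
  obtain ⟨i, rfl⟩ : ∃ i, l = i + 1 := Nat.exists_eq_add_one.2 <| Nat.pos_of_ne_zero <| by
    rintro rfl; simp [hD, prefixSum] at hDl
  have hi : i + 1 < n := by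
    by_contra! h; linarith [hD_tail (i + 1) (by omega)]
  have hpij : p ⟨i, by omega⟩ = p ⟨i + 1, hi⟩ := hp.apply_eq_of_prefixSum_lt rfl <| by
    linarith [hyz (i + 1), hq.prefixSum_le (i + 1), show 0 < D (i + 1) from hDl]
  have hqij : q ⟨i + 1, hi⟩ ≤ q ⟨i, by omega⟩ := hq.1 _ _ (by rw [Fin.le_def]; simp)
  have hDi := hD_le i (by omega)
  have hnext : D (i + 1) ≤ D (i + 2) := by
    simp only [hD, prefixSum_succ _ hi, prefixSum_succ _ (show i < n by omega)] at hDi ⊢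
    linarith
  have := hmax (i + 2) (mem_range.2 (by omega))
  rw [Prod.Lex.toLex_le_toLex] at this
  rcases this with h | ⟨-, h⟩
  · exact absurd hnext (not_le.2 h)
  · simp at h

lemma prefixSum_comp_perm_le {R : Fin n → ℝ} (hR : Antitone R) (σ : Equiv.Perm (Fin n))
    (m : ℕ) : prefixSum (R ∘ σ) m ≤ prefixSum R m := by
  set ind : Fin n → ℝ := fun i => if (i : ℕ) < m then 1 else 0
  have hmono : Monovary ind R := fun i j hRij => by
    have hji : j < i := lt_of_not_ge fun h => (hR h).not_gt hRij
    have : (j : ℕ) < i := hji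
    simp only [ind]
    split_ifs <;> first | omega | norm_num
  have := hmono.sum_smul_comp_perm_le_sum_smul (σ := σ)
  simpa [ind, prefixSum, sum_filter] using this

lemma sum_filter_val_lt_eq_sum_range_extend {α M : Type*} [Zero α] [AddCommMonoid M]
    (v : Fin n → α) (f : α → M) {k : ℕ} (hk : k ≤ n) :
    ∑ i ∈ univ.filter (fun i : Fin n => (i : ℕ) < k), f (v i) =
      ∑ j ∈ range k, f (Function.extend Fin.val v 0 j) := by
  rw [sum_filter]
  simp_rw [← Fin.val_injective.extend_apply v 0]
  rw [Fin.sum_univ_eq_sum_range (fun j => if j < k then f (Function.extend Fin.val v 0 j) else 0),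
    ← sum_filter]
  congr 1
  ext j
  simp only [mem_filter, mem_range]
  omega

theorem IsIsoProj.sum_filter_lt_le_of_prefixSum_le {U : ℝ → ℝ} (hUc : ConvexOn ℝ Set.univ U)
    (hU : Monotone U) {y z p q : EuclideanSpace ℝ (Fin n)} (hp : IsIsoProj y p)
    (hq : IsIsoProj z q) (hyz : ∀ m, prefixSum y m ≤ prefixSum z m) (k : ℕ) :
    ∑ i ∈ univ.filter (fun i : Fin n => (i : ℕ) < k), U (p i) ≤
      ∑ i ∈ univ.filter (fun i : Fin n => (i : ℕ) < k), U (q i) := by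
  wlog hk : k ≤ n generalizing k
  · have hkn : univ.filter (fun i : Fin n => (i : ℕ) < k) =
        univ.filter (fun i : Fin n => (i : ℕ) < n) := by
      ext i; simp only [mem_filter, mem_univ, true_and]; omega
    rw [hkn]
    exact this n le_rfl
  rw [sum_filter_val_lt_eq_sum_range_extend _ U hk, sum_filter_val_lt_eq_sum_range_extend _ U hk]
  refine hUc.sum_range_le_of_partialSums_le hU (fun a ha b hb hab => ?_) fun m hm => ?_
  · simp only [Set.mem_Iio] at ha hb
    have hpa := Fin.val_injective.extend_apply p 0 ⟨a, by omega⟩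
    have hpb := Fin.val_injective.extend_apply p 0 ⟨b, by omega⟩
    rw [Fin.val_mk] at hpa hpb
    rw [hpa, hpb]
    exact hp.1 ⟨a, by omega⟩ ⟨b, by omega⟩ hab
  · have := hp.prefixSum_mono hq hyz m
    rwa [prefixSum, prefixSum, sum_filter_val_lt_eq_sum_range_extend _ (fun t => t) (hm.trans hk),
      sum_filter_val_lt_eq_sum_range_extend _ (fun t => t) (hm.trans hk)] at this

end IsotonicProjection

theorem blind_case_quota_k_truthfulness_general
    {n k : ℕ} {Ω : Type*} [MeasurableSpace Ω]
    (μ : Measure Ω)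
    (ε : Ω → EuclideanSpace ℝ (Fin n))
    (R : EuclideanSpace ℝ (Fin n)) (hR : ∀ i j : Fin n, i ≤ j → R j ≤ R i)
    (σ : Equiv.Perm (Fin n))
    (P : EuclideanSpace ℝ (Fin n) → EuclideanSpace ℝ (Fin n))
    (hP : ∀ v, IsIsoProj v (P v))
    (U : ℝ → ℝ) (hU : Monotone U) (hUc : ConvexOn ℝ Set.univ U)
    (hint_true : Integrable (fun ω =>
      ∑ i ∈ Finset.univ.filter (fun i : Fin n => (i : ℕ) < k),
        U (P (R + ε ω) i)) μ)
    (hint_perm : Integrable (fun ω =>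
      ∑ i ∈ Finset.univ.filter (fun i : Fin n => (i : ℕ) < k),
        U (P (WithLp.toLp 2 (fun i => R (σ i) + ε ω i) : EuclideanSpace ℝ (Fin n)) i)) μ) :
    ∫ ω, ∑ i ∈ Finset.univ.filter (fun i : Fin n => (i : ℕ) < k),
        U (P (WithLp.toLp 2 (fun i => R (σ i) + ε ω i) : EuclideanSpace ℝ (Fin n)) i) ∂μ ≤
      ∫ ω, ∑ i ∈ Finset.univ.filter (fun i : Fin n => (i : ℕ) < k),
        U (P (R + ε ω) i) ∂μ := by
  refine integral_mono hint_perm hint_true fun ω => ?_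
  refine IsIsoProj.sum_filter_lt_le_of_prefixSum_le hUc hU (hP _) (hP _) (fun m => ?_) k
  change prefixSum (R.ofLp ∘ σ + (ε ω).ofLp) m ≤ prefixSum (R.ofLp + (ε ω).ofLp) m
  rw [prefixSum_add, prefixSum_add]
  linarith [prefixSum_comp_perm_le hR σ m]

/-- In the Blind Case with quota `k`, reporting the true ranking maximizes the
expected utility, for any nondecreasing convex utility `U`. -/
theorem blind_case_quota_k_truthfulness
    {n k : ℕ} (hk1 : 1 ≤ k) (hkn : k ≤ n) {Ω : Type*} [MeasurableSpace Ω]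
    (μ : Measure Ω) [IsProbabilityMeasure μ]
    (ε : Ω → EuclideanSpace ℝ (Fin n)) (hε : Exchangeable μ ε)
    (R : EuclideanSpace ℝ (Fin n)) (hR : ∀ i j : Fin n, i ≤ j → R j ≤ R i)
    (σ : Equiv.Perm (Fin n))
    (P : EuclideanSpace ℝ (Fin n) → EuclideanSpace ℝ (Fin n))
    (hP : ∀ v, IsIsoProj v (P v))
    (U : ℝ → ℝ) (hU : Monotone U) (hUc : ConvexOn ℝ Set.univ U)
    (hint_true : Integrable (fun ω =>
      ∑ i ∈ Finset.univ.filter (fun i : Fin n => (i : ℕ) < k),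
        U (P (R + ε ω) i)) μ)
    (hint_perm : Integrable (fun ω =>
      ∑ i ∈ Finset.univ.filter (fun i : Fin n => (i : ℕ) < k),
        U (P (WithLp.toLp 2 (fun i => R (σ i) + ε ω i) : EuclideanSpace ℝ (Fin n)) i)) μ) :
    ∫ ω, ∑ i ∈ Finset.univ.filter (fun i : Fin n => (i : ℕ) < k),
        U (P (WithLp.toLp 2 (fun i => R (σ i) + ε ω i) : EuclideanSpace ℝ (Fin n)) i) ∂μ ≤
      ∫ ω, ∑ i ∈ Finset.univ.filter (fun i : Fin n => (i : ℕ) < k),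
        U (P (R + ε ω) i) ∂μ :=
  blind_case_quota_k_truthfulness_general μ ε R hR σ P hP U hU hUc hint_true hint_perm
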